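/- arXiv:2403.08690 — 2 statements merged into one kernel-verified Lean document; each statement's English description precedes it below -/
import Mathlib

section
/- Let $t_0 < T$, $n, m \in \mathbb{N}$, and let $A : [t_0,T] \to \mathbb{R}^{n\times n}$ and $B : [t_0,T] \to \mathbb{R}^{n\times m}$ be continuous. Define the reachable set $\mathcal{R} \subseteq \mathbb{R}^n$ as the set of all $y \in \mathbb{R}^n$ such that there exists a continuous control $u : [t_0,T] \to \mathbb{R}^m$ for which the solution of $\dot{x}(t) = A(t)x(t) + B(t)u(t)$, $x(t_0) = 0$, satisfies $x(T) = y$. Define the map $\Gamma : \mathbb{R}^n \to \mathbb{R}^n$ by $\Gamma(\lambda^T) = x(T)$, where $\lambda : [t_0,T] \to \mathbb{R}^n$ solves the adjoint equation $\dot{\lambda}(t) = -A(t)^{\mathsf{tr}}\lambda(t)$, $\lambda(T) = \lambda^T$, and $x : [t_0,T] \to \mathbb{R}^n$ solves $\dot{x}(t) = A(t)x(t) + B(t)B(t)^{\mathsf{tr}}\lambda(t)$, $x(t_0) = 0$. Then $\mathcal{R} = \Gamma(\mathbb{R}^n)$. -/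
/-!
A state `Γ ζ` in the image of the HUM map is reached by the continuous control `Bᵀ λ`.
Conversely, the image of `Γ` is a subspace, so it suffices to show that a reachable `y` is
orthogonal to every `ζ` orthogonal to that image. Let `λ` solve the adjoint equation with
`λ(T) = ζ`. For `x(t₀) = 0` and `ẋ = A x + B u` the duality identity
`⟨x(T), λ(T)⟩ = ∫ ⟨u, Bᵀ λ⟩` holds. For the HUM trajectory it gives `0 = ⟨Γ ζ, ζ⟩ = ∫ |Bᵀ λ|²`,
so `Bᵀ λ ≡ 0`; for the trajectory reaching `y` it then gives `⟨y, ζ⟩ = 0`.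
Solutions of the linear equations exist on all of `[t₀, T]` by gluing Picard-Lindelöf solutions
on short intervals.
-/

open Matrix MeasureTheory Set
open scoped NNReal

section IntegralCurve

variable {E : Type*} [NormedAddCommGroup E] [NormedSpace ℝ E] {γ : ℝ → E} {v : ℝ → E → E} {a b : ℝ}

theorem exists_isIntegralCurveOn_Icc_of_lipschitzWith_of_mul_le [CompleteSpace E] {K : ℝ≥0}
    (hab : a ≤ b) (hK : K * (b - a) ≤ 1 / 2) (hlip : ∀ t ∈ Icc a b, LipschitzWith K (v t))
    (hcont : ∀ x, ContinuousOn (v · x) (Icc a b)) (x₀ : E) :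
    ∃ γ : ℝ → E, γ a = x₀ ∧ IsIntegralCurveOn γ v (Icc a b) := by
  obtain ⟨C, hC⟩ := isCompact_Icc.exists_bound_of_continuousOn (hcont x₀)
  have hC₀ : 0 ≤ C := (norm_nonneg _).trans (hC a ⟨le_rfl, hab⟩)
  -- On the ball of radius `2 C (b - a)` about `x₀` the field is bounded by `2 C`.
  have hR : 0 ≤ 2 * C * (b - a) := by have := sub_nonneg.2 hab; positivity
  have hpl : IsPicardLindelof v (⟨a, le_rfl, hab⟩ : Icc a b) x₀ ⟨2 * C * (b - a), hR⟩ 0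
      ⟨2 * C, by positivity⟩ K := by
    refine ⟨fun t ht => (hlip t ht).lipschitzOnWith, fun x _ => hcont x, fun t ht x hx => ?_, ?_⟩
    · have hx' : ‖x - x₀‖ ≤ 2 * C * (b - a) := by
        rw [Metric.mem_closedBall, dist_eq_norm] at hx; exact hx
      calc ‖v t x‖ ≤ ‖v t x₀‖ + K * ‖x - x₀‖ := by
            simpa [dist_eq_norm] using norm_le_norm_add_const_of_dist_le
              (by simpa [dist_eq_norm] using (hlip t ht).dist_le_mul x x₀)
        _ ≤ C + K * (2 * C * (b - a)) := by gcongr; exact hC t ht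
        _ ≤ 2 * C := by nlinarith
    · simp only [max_eq_left (sub_nonneg.2 hab), sub_self, sub_zero, NNReal.coe_zero]
      exact le_rfl
  exact hpl.exists_eq_forall_mem_Icc_hasDerivWithinAt₀

theorem IsIntegralCurveOn.piecewise_Icc {γ₁ γ₂ : ℝ → E} {c : ℝ}
    (h₁ : IsIntegralCurveOn γ₁ v (Icc a c)) (h₂ : IsIntegralCurveOn γ₂ v (Icc c b))
    (hc : γ₁ c = γ₂ c) (hac : a ≤ c) (hcb : c ≤ b) :
    IsIntegralCurveOn (fun t => if t ≤ c then γ₁ t else γ₂ t) v (Icc a b) := by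
  set γ : ℝ → E := fun t => if t ≤ c then γ₁ t else γ₂ t
  have e₁ : EqOn γ γ₁ (Icc a c) := fun t ht => if_pos ht.2
  have e₂ : EqOn γ γ₂ (Icc c b) := fun t ht => by
    rcases ht.1.eq_or_lt with rfl | h
    · simp [γ, hc]
    · simp [γ, h.not_ge]
  intro t ht
  have hfar : ∀ {s : Set ℝ}, t ∉ closure s → HasDerivWithinAt γ (v t (γ t)) s t := fun h =>
    hasDerivWithinAt_iff_hasFDerivWithinAt.2 (.of_notMem_closure h)
  rw [← Icc_union_Icc_eq_Icc hac hcb]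
  refine HasDerivWithinAt.union ?_ ?_
  · by_cases htc : t ≤ c
    · rw [e₁ ⟨ht.1, htc⟩]; exact (h₁ t ⟨ht.1, htc⟩).congr e₁ (e₁ ⟨ht.1, htc⟩)
    · refine hfar ?_
      rw [closure_Icc]; exact fun h => htc h.2
  · by_cases hct : c ≤ t
    · rw [e₂ ⟨hct, ht.2⟩]; exact (h₂ t ⟨hct, ht.2⟩).congr e₂ (e₂ ⟨hct, ht.2⟩)
    · refine hfar ?_
      rw [closure_Icc]; exact fun h => hct h.1

theorem exists_isIntegralCurveOn_Icc_of_lipschitzWith [CompleteSpace E] {K : ℝ≥0}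
    (hab : a ≤ b) (hlip : ∀ t ∈ Icc a b, LipschitzWith K (v t))
    (hcont : ∀ x, ContinuousOn (v · x) (Icc a b)) (x₀ : E) :
    ∃ γ : ℝ → E, γ a = x₀ ∧ IsIntegralCurveOn γ v (Icc a b) := by
  -- Glue solutions on consecutive intervals of length `δ`, on which Picard-Lindelöf applies.
  set δ : ℝ := 1 / (2 * (K + 1))
  have hδ : 0 < δ := by positivity
  have hKδ : K * δ ≤ 1 / 2 := by
    rw [← mul_div_assoc, mul_one, div_le_div_iff₀ (by positivity) two_pos]; nlinarith
  have short : ∀ a' c, a ≤ a' → a' ≤ c → c ≤ b → c - a' ≤ δ → ∀ x : E,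
      ∃ γ : ℝ → E, γ a' = x ∧ IsIntegralCurveOn γ v (Icc a' c) := fun a' c ha' hc hcb hδ' x =>
    exists_isIntegralCurveOn_Icc_of_lipschitzWith_of_mul_le hc
      ((mul_le_mul_of_nonneg_left hδ' K.coe_nonneg).trans hKδ)
      (fun t ht => hlip t ⟨ha'.trans ht.1, ht.2.trans hcb⟩)
      (fun x => (hcont x).mono (Icc_subset_Icc ha' hcb)) x
  suffices ∀ N : ℕ, ∀ a' ∈ Icc a b, b - a' ≤ N * δ → ∀ x : E,
      ∃ γ : ℝ → E, γ a' = x ∧ IsIntegralCurveOn γ v (Icc a' b) by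
    obtain ⟨N, hN⟩ := exists_nat_ge ((b - a) / δ)
    exact this N a ⟨le_rfl, hab⟩ ((div_le_iff₀ hδ).1 hN) x₀
  intro N
  induction N with
  | zero =>
    intro a' ha' hN x
    exact short a' b ha'.1 ha'.2 le_rfl (by simp at hN; linarith) x
  | succ N ih =>
    intro a' ha' hN x
    set c := min (a' + δ) b
    have hac : a' ≤ c := le_min (by linarith) ha'.2
    obtain ⟨γ₁, hγ₁a, hγ₁⟩ := short a' c ha'.1 hac (min_le_right _ _)
      (by linarith [min_le_left (a' + δ) b]) x
    obtain ⟨γ₂, hγ₂c, hγ₂⟩ := ih c ⟨ha'.1.trans hac, min_le_right _ _⟩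
      (by push_cast at hN; rcases min_choice (a' + δ) b with h | h <;> rw [show c = _ from h] <;>
        nlinarith [Nat.cast_nonneg (α := ℝ) N])
      (γ₁ c)
    exact ⟨_, by simp [hac, hγ₁a], hγ₁.piecewise_Icc hγ₂ hγ₂c.symm hac (min_le_right _ _)⟩

theorem mapsTo_const_sub_Icc : MapsTo (a + b - ·) (Icc a b) (Icc a b) := fun _ hs =>
  ⟨by linarith [hs.2], by linarith [hs.1]⟩

theorem IsIntegralCurveOn.comp_const_sub_Icc (hγ : IsIntegralCurveOn γ v (Icc a b)) :
    IsIntegralCurveOn (fun t => γ (a + b - t)) (fun t x => -v (a + b - t) x) (Icc a b) :=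
  fun t ht => by
    simpa [Function.comp_def] using (hγ _ (mapsTo_const_sub_Icc ht)).scomp t
      ((hasDerivAt_id t).const_sub _).hasDerivWithinAt mapsTo_const_sub_Icc

theorem exists_isIntegralCurveOn_Icc_of_lipschitzWith' [CompleteSpace E] {K : ℝ≥0}
    (hab : a ≤ b) (hlip : ∀ t ∈ Icc a b, LipschitzWith K (v t))
    (hcont : ∀ x, ContinuousOn (v · x) (Icc a b)) (x₁ : E) :
    ∃ γ : ℝ → E, γ b = x₁ ∧ IsIntegralCurveOn γ v (Icc a b) := by
  obtain ⟨γ, hγa, hγ⟩ := exists_isIntegralCurveOn_Icc_of_lipschitzWith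
    (v := fun t x => -v (a + b - t) x) hab (fun t ht => (hlip _ (mapsTo_const_sub_Icc ht)).neg)
    (fun x => ((hcont x).comp (by fun_prop) mapsTo_const_sub_Icc).neg) x₁
  refine ⟨fun t => γ (a + b - t), by simpa using hγa, ?_⟩
  simpa using hγ.comp_const_sub_Icc

end IntegralCurve

section Linear

variable {E : Type*} [NormedAddCommGroup E] [NormedSpace ℝ E] {M : ℝ → E →L[ℝ] E} {g : ℝ → E}
  {a b : ℝ}

theorem exists_lipschitzWith_clm_apply_add (hM : ContinuousOn M (Icc a b)) :
    ∃ K : ℝ≥0, ∀ t ∈ Icc a b, LipschitzWith K (fun x => M t x + g t) := by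
  obtain ⟨C, hC⟩ := isCompact_Icc.exists_bound_of_continuousOn hM
  refine ⟨C.toNNReal, fun t ht => ((M t).lipschitz.add (LipschitzWith.const (g t))).weaken ?_⟩
  rw [add_zero, ← NNReal.coe_le_coe, coe_nnnorm, Real.coe_toNNReal']
  exact (hC t ht).trans (le_max_left _ _)

variable [CompleteSpace E]

theorem exists_isIntegralCurveOn_Icc_clm_apply_add (hab : a ≤ b) (hM : ContinuousOn M (Icc a b))
    (hg : ContinuousOn g (Icc a b)) (x₀ : E) :
    ∃ γ : ℝ → E, γ a = x₀ ∧ IsIntegralCurveOn γ (fun t x => M t x + g t) (Icc a b) :=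
  have ⟨_, hK⟩ := exists_lipschitzWith_clm_apply_add (g := g) hM
  exists_isIntegralCurveOn_Icc_of_lipschitzWith hab hK
    (fun _ => (hM.clm_apply continuousOn_const).add hg) x₀

theorem exists_isIntegralCurveOn_Icc_clm_apply_add' (hab : a ≤ b) (hM : ContinuousOn M (Icc a b))
    (hg : ContinuousOn g (Icc a b)) (x₁ : E) :
    ∃ γ : ℝ → E, γ b = x₁ ∧ IsIntegralCurveOn γ (fun t x => M t x + g t) (Icc a b) :=
  have ⟨_, hK⟩ := exists_lipschitzWith_clm_apply_add (g := g) hM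
  exists_isIntegralCurveOn_Icc_of_lipschitzWith' hab hK
    (fun _ => (hM.clm_apply continuousOn_const).add hg) x₁

end Linear

section Matrix

variable {X ι κ : Type*} [TopologicalSpace X] {a b : ℝ}

theorem ContinuousOn.matrix_mulVec [Fintype κ] {s : Set X} {A : X → Matrix ι κ ℝ} {v : X → κ → ℝ}
    (hA : ContinuousOn A s) (hv : ContinuousOn v s) : ContinuousOn (fun t => A t *ᵥ v t) s :=
  (continuous_fst.matrix_mulVec continuous_snd).comp_continuousOn (hA.prodMk hv)

theorem ContinuousOn.matrix_transpose {s : Set X} {A : X → Matrix ι κ ℝ}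
    (hA : ContinuousOn A s) : ContinuousOn (fun t => (A t)ᵀ) s :=
  continuous_id.matrix_transpose.comp_continuousOn hA

theorem ContinuousOn.dotProduct [Fintype ι] {s : Set X} {v w : X → ι → ℝ}
    (hv : ContinuousOn v s) (hw : ContinuousOn w s) : ContinuousOn (fun t => v t ⬝ᵥ w t) s :=
  (continuous_fst.dotProduct continuous_snd).comp_continuousOn (hv.prodMk hw)

theorem HasDerivWithinAt.dotProduct [Fintype ι] {s : Set ℝ} {t : ℝ} {v w : ℝ → ι → ℝ}
    {v' w' : ι → ℝ} (hv : HasDerivWithinAt v v' s t) (hw : HasDerivWithinAt w w' s t) :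
    HasDerivWithinAt (fun t => v t ⬝ᵥ w t) (v' ⬝ᵥ w t + v t ⬝ᵥ w') s t := by
  have h := HasDerivWithinAt.fun_sum (u := Finset.univ) fun i _ =>
    (hasDerivWithinAt_pi.1 hv i).mul (hasDerivWithinAt_pi.1 hw i)
  rwa [Finset.sum_add_distrib] at h

variable [Fintype ι] [DecidableEq ι]

theorem Matrix.continuous_toContinuousLinearMap :
    Continuous fun A : Matrix ι ι ℝ => LinearMap.toContinuousLinearMap (Matrix.toLin' A) :=
  (LinearMap.toContinuousLinearMap.toLinearMap ∘ₗ Matrix.toLin'.toLinearMap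
    : Matrix ι ι ℝ →ₗ[ℝ] _).continuous_of_finiteDimensional

theorem exists_isIntegralCurveOn_Icc_mulVec_add {M : ℝ → Matrix ι ι ℝ} {g : ℝ → ι → ℝ}
    (hab : a ≤ b) (hM : ContinuousOn M (Icc a b)) (hg : ContinuousOn g (Icc a b)) (x₀ : ι → ℝ) :
    ∃ x : ℝ → ι → ℝ, x a = x₀ ∧ IsIntegralCurveOn x (fun t y => M t *ᵥ y + g t) (Icc a b) :=
  exists_isIntegralCurveOn_Icc_clm_apply_add hab
    (Matrix.continuous_toContinuousLinearMap.comp_continuousOn hM) hg x₀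

theorem exists_isIntegralCurveOn_Icc_mulVec_add' {M : ℝ → Matrix ι ι ℝ} {g : ℝ → ι → ℝ}
    (hab : a ≤ b) (hM : ContinuousOn M (Icc a b)) (hg : ContinuousOn g (Icc a b)) (x₁ : ι → ℝ) :
    ∃ x : ℝ → ι → ℝ, x b = x₁ ∧ IsIntegralCurveOn x (fun t y => M t *ᵥ y + g t) (Icc a b) :=
  exists_isIntegralCurveOn_Icc_clm_apply_add' hab
    (Matrix.continuous_toContinuousLinearMap.comp_continuousOn hM) hg x₁

end Matrix

section Duality

variable {ι κ : Type*} [Fintype ι] [Fintype κ] {a b : ℝ}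

theorem dotProduct_sub_dotProduct_eq_integral {A : ℝ → Matrix ι ι ℝ} {B : ℝ → Matrix ι κ ℝ}
    {u : ℝ → κ → ℝ} {l x : ℝ → ι → ℝ} (hab : a ≤ b) (hB : ContinuousOn B (Icc a b))
    (hu : ContinuousOn u (Icc a b)) (hl : IsIntegralCurveOn l (fun t y => -((A t)ᵀ *ᵥ y)) (Icc a b))
    (hx : IsIntegralCurveOn x (fun t y => A t *ᵥ y + B t *ᵥ u t) (Icc a b)) :
    x b ⬝ᵥ l b - x a ⬝ᵥ l a = ∫ t in a..b, u t ⬝ᵥ (B t)ᵀ *ᵥ l t := by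
  -- The `A`-terms cancel: `⟨A x, l⟩ = ⟨x, Aᵀ l⟩`.
  have hderiv : ∀ t ∈ Icc a b,
      HasDerivWithinAt (fun t => x t ⬝ᵥ l t) (u t ⬝ᵥ (B t)ᵀ *ᵥ l t) (Icc a b) t := fun t ht =>
    ((hx t ht).dotProduct (hl t ht)).congr_deriv (by
      rw [add_dotProduct, dotProduct_neg, dotProduct_transpose_mulVec, dotProduct_transpose_mulVec,
        dotProduct_comm (A t *ᵥ x t), dotProduct_comm (B t *ᵥ u t)]
      ring)
  have hl_cont : ContinuousOn l (Icc a b) := fun t ht => (hl t ht).continuousWithinAt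
  have hint : IntervalIntegrable (fun t => u t ⬝ᵥ (B t)ᵀ *ᵥ l t) volume a b :=
    (hu.dotProduct (hB.matrix_transpose.matrix_mulVec hl_cont)).intervalIntegrable_of_Icc hab
  exact (intervalIntegral.integral_eq_sub_of_hasDerivAt_of_le hab
    (fun t ht => (hderiv t ht).continuousWithinAt)
    (fun t ht => (hderiv t (Ioo_subset_Icc_self ht)).hasDerivAt (Icc_mem_nhds ht.1 ht.2)) hint).symm

theorem eqOn_zero_of_integral_dotProduct_self_eq_zero {q : ℝ → ι → ℝ} (hab : a < b)
    (hq : ContinuousOn q (Icc a b)) (h : ∫ t in a..b, q t ⬝ᵥ q t = 0) : EqOn q 0 (Icc a b) := by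
  intro t ht
  by_contra hne
  have hpos := intervalIntegral.integral_pos hab (hq.dotProduct hq)
    (fun s _ => Finset.sum_nonneg fun i _ => mul_self_nonneg (q s i))
    ⟨t, ht, (Finset.sum_nonneg fun i _ => mul_self_nonneg (q t i)).lt_of_ne
      (Ne.symm (dotProduct_self_eq_zero.not.2 hne))⟩
  exact hpos.ne' h

end Duality

theorem Submodule.mem_of_forall_dotProduct_eq_zero {K ι : Type*} [Field K] [Fintype ι]
    [DecidableEq ι] {W : Submodule K (ι → K)} {y : ι → K}
    (h : ∀ ζ : ι → K, (∀ w ∈ W, ζ ⬝ᵥ w = 0) → ζ ⬝ᵥ y = 0) : y ∈ W := by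
  rw [← Subspace.forall_mem_dualAnnihilator_apply_eq_zero_iff]
  intro φ hφ
  obtain ⟨ζ, rfl⟩ := (dotProductEquiv K ι).surjective φ
  exact h ζ fun w hw => (Submodule.mem_dualAnnihilator _).1 hφ w hw

section HUM

variable {ι κ : Type*} [Fintype ι] [Fintype κ] {t₀ T : ℝ}
  {A : ℝ → Matrix ι ι ℝ} {B : ℝ → Matrix ι κ ℝ}

/-- The image of the HUM map `Γ : λ(T) ↦ x(T)`. Taking all solution pairs `(λ, x)` makes it a
subspace without knowing that solutions are unique, i.e. that `Γ` is a well-defined map. -/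
def humImage (t₀ T : ℝ) (A : ℝ → Matrix ι ι ℝ) (B : ℝ → Matrix ι κ ℝ) : Submodule ℝ (ι → ℝ) where
  carrier := {y | ∃ l x : ℝ → ι → ℝ,
    IsIntegralCurveOn l (fun t y => -((A t)ᵀ *ᵥ y)) (Icc t₀ T) ∧
    IsIntegralCurveOn x (fun t y => A t *ᵥ y + B t *ᵥ ((B t)ᵀ *ᵥ l t)) (Icc t₀ T) ∧
    x t₀ = 0 ∧ x T = y}
  zero_mem' := ⟨0, 0, fun t _ => (hasDerivWithinAt_const t _ 0).congr_deriv (by simp),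
    fun t _ => (hasDerivWithinAt_const t _ 0).congr_deriv (by simp), rfl, rfl⟩
  add_mem' := by
    rintro _ _ ⟨l, x, hl, hx, hx0, rfl⟩ ⟨l', x', hl', hx', hx0', rfl⟩
    refine ⟨l + l', x + x', fun t ht => ((hl t ht).add (hl' t ht)).congr_deriv ?_,
      fun t ht => ((hx t ht).add (hx' t ht)).congr_deriv ?_, by simp [hx0, hx0'], rfl⟩
    · simp only [Pi.add_apply, mulVec_add, neg_add]
    · simp only [Pi.add_apply, mulVec_add]; abel
  smul_mem' := by
    rintro c _ ⟨l, x, hl, hx, hx0, rfl⟩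
    refine ⟨c • l, c • x, fun t ht => ((hl t ht).const_smul c).congr_deriv ?_,
      fun t ht => ((hx t ht).const_smul c).congr_deriv ?_, by simp [hx0], rfl⟩
    · simp only [Pi.smul_apply, mulVec_smul, smul_neg]
    · simp only [Pi.smul_apply, mulVec_smul, smul_add]

variable [DecidableEq ι]

theorem mem_humImage_of_isIntegralCurveOn {u : ℝ → κ → ℝ} {x : ℝ → ι → ℝ} (ht : t₀ < T)
    (hA : ContinuousOn A (Icc t₀ T)) (hB : ContinuousOn B (Icc t₀ T))
    (hu : ContinuousOn u (Icc t₀ T))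
    (hx : IsIntegralCurveOn x (fun t y => A t *ᵥ y + B t *ᵥ u t) (Icc t₀ T)) (hx0 : x t₀ = 0) :
    x T ∈ humImage t₀ T A B := by
  refine Submodule.mem_of_forall_dotProduct_eq_zero fun ζ hζ => ?_
  obtain ⟨l, hlT, hl⟩ := exists_isIntegralCurveOn_Icc_mulVec_add' ht.le hA.matrix_transpose.neg
    (continuousOn_const (c := 0)) ζ
  replace hl : IsIntegralCurveOn l (fun t y => -((A t)ᵀ *ᵥ y)) (Icc t₀ T) := by
    simpa [neg_mulVec] using hl
  have hBl : ContinuousOn (fun t => (B t)ᵀ *ᵥ l t) (Icc t₀ T) :=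
    hB.matrix_transpose.matrix_mulVec fun t ht => (hl t ht).continuousWithinAt
  obtain ⟨z, hz0, hz⟩ := exists_isIntegralCurveOn_Icc_mulVec_add ht.le hA (hB.matrix_mulVec hBl) 0
  -- `⟨Γ ζ, ζ⟩` is the energy of the control `Bᵀ λ`; it vanishes since `Γ ζ ∈ humImage ⊥ ζ`.
  have henergy : ∫ t in t₀..T, (B t)ᵀ *ᵥ l t ⬝ᵥ (B t)ᵀ *ᵥ l t = 0 := by
    rw [← dotProduct_sub_dotProduct_eq_integral ht.le hB hBl hl hz, hz0, hlT, zero_dotProduct,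
      sub_zero, dotProduct_comm]
    exact hζ _ ⟨l, z, hl, hz, hz0, rfl⟩
  have hBl0 := eqOn_zero_of_integral_dotProduct_self_eq_zero ht hBl henergy
  have hdual := dotProduct_sub_dotProduct_eq_integral ht.le hB hu hl hx
  rw [hx0, hlT, zero_dotProduct, sub_zero, intervalIntegral.integral_congr (g := 0)
    fun t ht' => by simp [hBl0 (uIcc_of_le ht.le ▸ ht')]] at hdual
  simpa [dotProduct_comm] using hdual

end HUM

/-- **HUM controllability theorem** (Theorem 1). The reachable set `𝓡` of the linear
time-varying system `ẋ = A(t) x + B(t) u`, `x(t₀) = 0`, coincides with the image of the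
HUM map `Γ : λᵀ ↦ x(T)`, where `λ` solves the adjoint equation `λ̇ = -A(t)ᵀ λ`,
`λ(T) = λᵀ`, and `x` solves `ẋ = A(t) x + B(t) B(t)ᵀ λ(t)`, `x(t₀) = 0`. -/
theorem hum_reachable_eq_image {n m : ℕ} (t₀ T : ℝ) (ht : t₀ < T)
    (A : ℝ → Matrix (Fin n) (Fin n) ℝ) (B : ℝ → Matrix (Fin n) (Fin m) ℝ)
    (hA : ContinuousOn A (Set.Icc t₀ T)) (hB : ContinuousOn B (Set.Icc t₀ T)) :
    {y : Fin n → ℝ | ∃ u : ℝ → Fin m → ℝ, ContinuousOn u (Set.Icc t₀ T) ∧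
      ∃ x : ℝ → Fin n → ℝ,
        (∀ t ∈ Set.Icc t₀ T,
          HasDerivWithinAt x (A t *ᵥ x t + B t *ᵥ u t) (Set.Icc t₀ T) t) ∧
        x t₀ = 0 ∧ x T = y} =
    {y : Fin n → ℝ | ∃ lT : Fin n → ℝ, ∃ l x : ℝ → Fin n → ℝ,
        (∀ t ∈ Set.Icc t₀ T,
          HasDerivWithinAt l (-((A t)ᵀ *ᵥ l t)) (Set.Icc t₀ T) t) ∧
        l T = lT ∧
        (∀ t ∈ Set.Icc t₀ T,
          HasDerivWithinAt x (A t *ᵥ x t + B t *ᵥ ((B t)ᵀ *ᵥ l t)) (Set.Icc t₀ T) t) ∧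
        x t₀ = 0 ∧ x T = y} := by
  ext y
  constructor
  · rintro ⟨u, hu, x, hx, hx0, rfl⟩
    obtain ⟨l, z, hl, hz, hz0, hzT⟩ := mem_humImage_of_isIntegralCurveOn ht hA hB hu hx hx0
    exact ⟨_, l, z, hl, rfl, hz, hz0, hzT⟩
  · rintro ⟨_, l, x, hl, -, hx, hx0, rfl⟩
    exact ⟨_, hB.matrix_transpose.matrix_mulVec fun t ht => (hl t ht).continuousWithinAt,
      x, hx, hx0, rfl⟩
end

section
/- Let $0 = t_0 < T$, let $w : [0,T] \to \mathbb{R}$ be continuous, and set $c_1 = \exp\big(\int_{0}^{T} w(s)\,ds\big)$ and $c_2 = \int_{0}^{T} \exp\big(-\int_{0}^{s} w(r)\,dr\big)\,ds$. Let $\mu_0$ and $\nu$ be Borel probability measures on $\mathbb{R}$ with finite first moment, and let $S : \mathbb{R} \to \mathbb{R}$ be a Borel measurable transport map with $S_\# \mu_0 = \nu$. Define the state- and target-dependent static bias $b(x) = \dfrac{S(x) - x\, c_1}{c_1 c_2}$, and for each $x \in \mathbb{R}$ let $\Phi(\cdot, x)$ solve $\partial_t \Phi(t,x) = w(t)\Phi(t,x)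 + b(x)$, $\Phi(0,x) = x$. Then the terminal flow map satisfies $\Phi(T, x) = S(x)$ for all $x \in \mathbb{R}$, and consequently $(\Phi(T,\cdot))_\# \mu_0 = \nu$, i.e., the mean-field neural network equation with identity activation is controllable from $\mu_0$ to $\nu$ in the sense of push-forward of measures. -/
open MeasureTheory

/-- `c₁(t) = exp(∫_{t₀}^t w(s) ds)`. -/
noncomputable def c1 (t₀ : ℝ) (w : ℝ → ℝ) (t : ℝ) : ℝ :=
  Real.exp (∫ s in t₀..t, w s)

/-- `c₂(t) = ∫_{t₀}^t exp(-∫_{t₀}^s w(r) dr) ds`. -/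
noncomputable def c2 (t₀ : ℝ) (w : ℝ → ℝ) (t : ℝ) : ℝ :=
  ∫ s in t₀..t, Real.exp (-∫ r in t₀..s, w r)

/-!
Variation of constants: with `A(t) = ∫_{t₀}^t a`, the function `y e^{-A} - b c₂` has zero
derivative along any solution of `y' = a y + b`, so `y(t) = c₁(t) (y(t₀) + b c₂(t))`.
The bias `b(x) = (S(x) - x c₁)/(c₁ c₂)` is exactly the one making this equal to `S(x)` at `t = T`,
hence `Φ(T, ·) = S` and `(Φ(T, ·))_♯ μ₀ = S_♯ μ₀ = ν`.
-/

open Set Real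

theorem ContinuousOn.hasDerivWithinAt_primitive_Icc {E : Type*} [NormedAddCommGroup E]
    [NormedSpace ℝ E] [CompleteSpace E] {f : ℝ → E} {a b t : ℝ}
    (hf : ContinuousOn f (Icc a b)) (ht : t ∈ Icc a b) :
    HasDerivWithinAt (fun u => ∫ x in a..u, f x) (f t) (Icc a b) t := by
  have : Fact (t ∈ Icc a b) := ⟨ht⟩
  exact intervalIntegral.integral_hasDerivWithinAt_right
    ((hf.mono (Icc_subset_Icc le_rfl ht.2)).intervalIntegrable_of_Icc ht.1)
    (hf.stronglyMeasurableAtFilter_nhdsWithin measurableSet_Icc t) (hf t ht)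

theorem eq_of_hasDerivWithinAt_zero_Icc {E : Type*} [NormedAddCommGroup E] [NormedSpace ℝ E]
    {f : ℝ → E} {a b : ℝ} (hf : ∀ t ∈ Icc a b, HasDerivWithinAt f 0 (Icc a b) t) :
    ∀ t ∈ Icc a b, f t = f a :=
  constant_of_has_deriv_right_zero (fun t ht => (hf t ht).continuousWithinAt) fun t ht =>
    (hf t (Ico_subset_Icc_self ht)).mono_of_mem_nhdsWithin (Icc_mem_nhdsGE_of_mem ht)

theorem c2_pos {t₀ T : ℝ} {a : ℝ → ℝ} (hT : t₀ < T) (ha : ContinuousOn a (Icc t₀ T)) :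
    0 < c2 t₀ a T := by
  have hA : ContinuousOn (fun t => ∫ s in t₀..t, a s) (Icc t₀ T) := fun t ht =>
    (ha.hasDerivWithinAt_primitive_Icc ht).continuousWithinAt
  exact intervalIntegral.intervalIntegral_pos_of_pos_on
    (hA.neg.rexp.intervalIntegrable_of_Icc hT.le) (fun _ _ => exp_pos _) hT

theorem affineODE_solution_eq {t₀ T b : ℝ} {a y : ℝ → ℝ} (ha : ContinuousOn a (Icc t₀ T))
    (hy : ∀ t ∈ Icc t₀ T, HasDerivWithinAt y (a t * y t + b) (Icc t₀ T) t) :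
    ∀ t ∈ Icc t₀ T, y t = c1 t₀ a t * (y t₀ + b * c2 t₀ a t) := by
  set A : ℝ → ℝ := fun t => ∫ s in t₀..t, a s
  have hA (t) (ht : t ∈ Icc t₀ T) : HasDerivWithinAt A (a t) (Icc t₀ T) t :=
    ha.hasDerivWithinAt_primitive_Icc ht
  have hc2 (t) (ht : t ∈ Icc t₀ T) : HasDerivWithinAt (c2 t₀ a) (exp (-A t)) (Icc t₀ T) t :=
    ContinuousOn.hasDerivWithinAt_primitive_Icc
      (fun s hs => (hA s hs).continuousWithinAt.neg.rexp) ht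
  have hconst := eq_of_hasDerivWithinAt_zero_Icc
    (f := fun t => y t * exp (-A t) - b * c2 t₀ a t) fun t ht => by
      refine (((hy t ht).mul (hA t ht).neg.exp).sub ((hc2 t ht).const_mul b)).congr_deriv ?_
      simp only [Pi.neg_apply]
      ring
  intro t ht
  have hA₀ : A t₀ = 0 := intervalIntegral.integral_same
  have hc2₀ : c2 t₀ a t₀ = 0 := intervalIntegral.integral_same
  have h := hconst t ht
  simp only [hA₀, hc2₀, neg_zero, exp_zero, mul_one, mul_zero, sub_zero] at h
  show y t = exp (A t) * _
  rw [← h, exp_neg]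
  field_simp
  ring

theorem mean_field_controllability_general (T : ℝ) (hT : (0 : ℝ) < T)
    (w : ℝ → ℝ) (hw : ContinuousOn w (Set.Icc 0 T))
    (μ0 ν : Measure ℝ)
    (S : ℝ → ℝ) (hpush : μ0.map S = ν)
    (Φ : ℝ → ℝ → ℝ)
    (hΦ0 : ∀ x, Φ 0 x = x)
    (hΦ : ∀ x, ∀ t ∈ Set.Icc (0 : ℝ) T,
      HasDerivWithinAt (fun s => Φ s x)
        (w t * Φ t x + (S x - x * c1 0 w T) / (c1 0 w T * c2 0 w T))
        (Set.Icc (0 : ℝ) T) t) :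
    (∀ x, Φ T x = S x) ∧ μ0.map (Φ T) = ν := by
  have hc1 : c1 0 w T ≠ 0 := (exp_pos _).ne'
  have hc2 : c2 0 w T ≠ 0 := (c2_pos hT hw).ne'
  have hΦT (x : ℝ) : Φ T x = S x := by
    rw [affineODE_solution_eq hw (hΦ x) T (right_mem_Icc.2 hT.le), hΦ0]
    field_simp
    ring
  exact ⟨hΦT, by rw [funext hΦT, hpush]⟩

/-- **Mean-field controllability via a transport map and static bias.** If `S` pushes
`μ₀` forward to `ν`, then the state-dependent static bias `b(x) = (S(x) - x c₁)/(c₁ c₂)`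
makes the characteristic flow `∂ₜΦ(t,x) = w(t)Φ(t,x) + b(x)`, `Φ(0,x) = x`, satisfy
`Φ(T,x) = S(x)` for all `x`, hence `(Φ(T,·))_♯ μ₀ = ν`: the mean-field neural network
equation with identity activation is controllable from `μ₀` to `ν`. -/
theorem mean_field_controllability (T : ℝ) (hT : (0 : ℝ) < T)
    (w : ℝ → ℝ) (hw : ContinuousOn w (Set.Icc 0 T))
    (μ0 ν : Measure ℝ) [IsProbabilityMeasure μ0] [IsProbabilityMeasure ν]
    (hμ0 : Integrable (fun x => |x|) μ0) (hν : Integrable (fun x => |x|) ν)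
    (S : ℝ → ℝ) (hS : Measurable S) (hpush : μ0.map S = ν)
    (Φ : ℝ → ℝ → ℝ)
    (hΦ0 : ∀ x, Φ 0 x = x)
    (hΦ : ∀ x, ∀ t ∈ Set.Icc (0 : ℝ) T,
      HasDerivWithinAt (fun s => Φ s x)
        (w t * Φ t x + (S x - x * c1 0 w T) / (c1 0 w T * c2 0 w T))
        (Set.Icc (0 : ℝ) T) t) :
    (∀ x, Φ T x = S x) ∧ μ0.map (Φ T) = ν :=
  mean_field_controllability_general T hT w hw μ0 ν S hpush Φ hΦ0 hΦ
end
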